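/- arXiv:1607.04579 — 4 statements merged into one kernel-verified Lean document; each statement's English description precedes it below -/
import Mathlib

section
/- Let ν be a σ-finite measure on a measurable space Z, X and Y metric spaces. Let p : Z × X → [0,∞) be a conditional density (∫ p(z,x) dν(z) = 1 for every x ∈ X), f : Z × X → ℝ, and set v(x) := ∫ f(z,x) p(z,x) dν(z). Assume: for ν-a.e. z the map x ↦ f(z,x)p(z,x) is continuous; there exists a ν-integrable function G with |f(z,x)p(z,x)| ≤ G(z) for all x ∈ X and ν-a.e. z; for each y ∈ Y the loss ℓ(y,·) : ℝ → ℝ is convex and differentiable, and the derivative map (w, y) ↦ ℓ'(y, w) is jointly continuous on ℝ × Y. Then the optimal dual function u*(x,y) := ℓ'(y, v(x)) is, for each (x,y), the unique maximizer over u ∈ ℝ of u·v(x) − ℓ*(y,u), and (x,y) ↦ u*(x,y) is continuous on X × Y. (Proposition 1, part (2).) -/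
open MeasureTheory

/-- **Proposition 1, part (2) (continuous case).**  With `v x = ∫ f(z,x) p(z,x) dν(z)`,
a convex loss `ℓ y` differentiable in its real argument whose derivative
`(w, y) ↦ ℓ'(y, w)` is jointly continuous, and dominated, continuous-in-`x`
integrands, the optimal dual `u*(x,y) = ℓ'(y, v x)` is for each `(x,y)` the unique
maximizer of `u ↦ u ⬝ v x − ℓ*(y,u)` among the `u` with finite conjugate value,
and `(x,y) ↦ u*(x,y)` is continuous on `X × Y`. -/
theorem optimal_dual_unique_continuous_joint
    {Z : Type*} [MeasurableSpace Z] {X : Type*} [MetricSpace X]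
    {Y : Type*} [MetricSpace Y]
    (ν : Measure Z) [SigmaFinite ν]
    (p : Z × X → ℝ) (hp_nonneg : ∀ z x, 0 ≤ p (z, x))
    (hp_dens : ∀ x : X, ∫ z, p (z, x) ∂ν = 1)
    (f : Z × X → ℝ)
    (v : X → ℝ) (hv : ∀ x, v x = ∫ z, f (z, x) * p (z, x) ∂ν)
    (hfp_meas : ∀ x : X, AEStronglyMeasurable (fun z => f (z, x) * p (z, x)) ν)
    (hcont : ∀ᵐ z ∂ν, Continuous fun x => f (z, x) * p (z, x))
    (G : Z → ℝ) (hG : Integrable G ν)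
    (hdom : ∀ᵐ z ∂ν, ∀ x : X, |f (z, x) * p (z, x)| ≤ G z)
    (ℓ : Y → ℝ → ℝ) (ℓ' : Y → ℝ → ℝ)
    (hconv : ∀ y, ConvexOn ℝ Set.univ (ℓ y))
    (hderiv : ∀ y w, HasDerivAt (ℓ y) (ℓ' y w) w)
    (hderiv_cont : Continuous fun q : ℝ × Y => ℓ' q.2 q.1)
    (ℓstar : Y → ℝ → EReal)
    (hℓstar : ∀ y u, ℓstar y u = ⨆ w : ℝ, ((u * w - ℓ y w : ℝ) : EReal)) :
    (∀ x : X, ∀ y : Y,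
      -- `u*(x,y) := ℓ'(y, v x)` is a competitor (finite conjugate value) ...
      ℓstar y (ℓ' y (v x)) ≠ ⊤ ∧
      -- ... it maximizes `u ↦ u • v x − ℓ*(y,u)` over competitors ...
      (∀ u : ℝ, ℓstar y u ≠ ⊤ →
        u * v x - (ℓstar y u).toReal ≤
          ℓ' y (v x) * v x - (ℓstar y (ℓ' y (v x))).toReal) ∧
      -- ... and it is the unique such maximizer:
      (∀ u : ℝ, ℓstar y u ≠ ⊤ →
        u * v x - (ℓstar y u).toReal =
          ℓ' y (v x) * v x - (ℓstar y (ℓ' y (v x))).toReal → u = ℓ' y (v x))) ∧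
    Continuous fun q : X × Y => ℓ' q.2 (v q.1) := by
  -- tangent line inequality for convex differentiable functions
  have key : ∀ (y : Y) (w0 w : ℝ), ℓ y w0 + ℓ' y w0 * (w - w0) ≤ ℓ y w := by
    intro y w0 w
    rcases lt_trichotomy w0 w with h | h | h
    · have := (hconv y).le_slope_of_hasDerivAt (Set.mem_univ w0) (Set.mem_univ w) h
        (hderiv y w0)
      rw [slope_def_field] at this
      have hpos : (0:ℝ) < w - w0 := by linarith
      nlinarith [(le_div_iff₀ hpos).mp this]
    · simp [h]
    · have := (hconv y).slope_le_of_hasDerivAt (Set.mem_univ w) (Set.mem_univ w0) h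
        (hderiv y w0)
      rw [slope_def_field] at this
      nlinarith [div_le_iff₀ (show (0:ℝ) < w0 - w by linarith) |>.mp this]
  have hstar_eq : ∀ (y : Y) (w0 : ℝ),
      ℓstar y (ℓ' y w0) = ((ℓ' y w0 * w0 - ℓ y w0 : ℝ) : EReal) := by
    intro y w0
    rw [hℓstar]
    apply le_antisymm
    · apply iSup_le
      intro w
      have h := key y w0 w
      exact_mod_cast (by nlinarith : (ℓ' y w0 * w - ℓ y w : ℝ) ≤ ℓ' y w0 * w0 - ℓ y w0)
    · exact le_iSup (fun w => ((ℓ' y w0 * w - ℓ y w : ℝ) : EReal)) w0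
  constructor
  · intro x y
    set w0 := v x with hw0
    have hfin := hstar_eq y w0
    have htop : ℓstar y (ℓ' y w0) ≠ ⊤ := by rw [hfin]; exact EReal.coe_ne_top _
    have htoReal : (ℓstar y (ℓ' y w0)).toReal = ℓ' y w0 * w0 - ℓ y w0 := by
      rw [hfin, EReal.toReal_coe]
    -- finite values of ℓstar dominate each term
    have hbound : ∀ u : ℝ, ℓstar y u ≠ ⊤ → ∀ w : ℝ,
        u * w - ℓ y w ≤ (ℓstar y u).toReal := by
      intro u hu w
      have hle : ((u * w - ℓ y w : ℝ) : EReal) ≤ ℓstar y u := by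
        rw [hℓstar]; exact le_iSup (fun w => ((u * w - ℓ y w : ℝ) : EReal)) w
      have hbot : ℓstar y u ≠ ⊥ := by
        intro h
        rw [h, le_bot_iff] at hle
        exact EReal.coe_ne_bot _ hle
      have := EReal.coe_toReal hu hbot
      rw [← this] at hle
      exact_mod_cast hle
    refine ⟨htop, ?_, ?_⟩
    · intro u hu
      have := hbound u hu w0
      rw [htoReal]
      linarith
    · intro u hu heq
      rw [htoReal] at heq
      have hr : (ℓstar y u).toReal = u * w0 - ℓ y w0 := by linarith
      -- u is a subgradient of ℓ y at w0
      have hsub : ∀ w : ℝ, ℓ y w0 + u * (w - w0) ≤ ℓ y w := by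
        intro w
        have := hbound u hu w
        rw [hr] at this
        nlinarith
      -- g w = ℓ y w - u * w has a global min at w0
      have hmin : IsLocalMin (fun w => ℓ y w - u * w) w0 :=
        Filter.Eventually.of_forall (fun w => by have := hsub w; simp; nlinarith)
      have hd : HasDerivAt (fun w => ℓ y w - u * w) (ℓ' y w0 - u) w0 :=
        (hderiv y w0).sub ((hasDerivAt_id w0).const_mul u |>.congr_deriv (by ring))
      have := hmin.hasDerivAt_eq_zero hd
      linarith
  · -- continuity
    have hv_cont : Continuous v := by
      have : Continuous fun x : X => ∫ z, f (z, x) * p (z, x) ∂ν := by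
        apply continuous_of_dominated hfp_meas
        · intro x
          filter_upwards [hdom] with z hz
          rw [Real.norm_eq_abs]; exact hz x
        · exact hG
        · exact hcont
      have hvf : v = fun x : X => ∫ z, f (z, x) * p (z, x) ∂ν := funext hv
      rw [hvf]; exact this
    exact hderiv_cont.comp ((hv_cont.comp continuous_fst).prodMk continuous_snd)
end

section
/- Let ν be a σ-finite measure on a measurable space Z, X a metric space with distance d, Y a set. Let p : Z × X → [0,∞) be a conditional density (∫ p(z,x) dν(z) = 1 for every x ∈ X) and f : Z × X → ℝ, and set v(x) := ∫ f(z,x) p(z,x) dν(z). Suppose: for each y ∈ Y, ℓ(y,·) is differentiable with L-Lipschitz derivative ℓ'(y,·); |f(z,x₁) − f(z,x₂)| ≤ M_f · d(x₁,x₂) for all z and all x₁, x₂ (uniform Lipschitzness in x); |p(z,x₁) − p(z,x₂)| ≤ M_p · d(x₁,x₂) for all z and all x₁, x₂; for every x, the functions z ↦ f(z,x)p(z,x) and z ↦ f(z,x) are ν-integrable with ∫ |f(z,x)| dν(z) ≤ B. Then the optimal dual function u*(x,y) := ℓ'(y, v(x)) satisfies |u*(x₁,y) − u*(x₂,y)|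 ≤ (L·M_f + L·M_p·B) · d(x₁,x₂) for all x₁, x₂ ∈ X and every y ∈ Y; i.e., u*(·,y) is Lipschitz continuous. (Claim established in Appendix A.) -/
open MeasureTheory

/-- **Lipschitz continuity of the optimal dual function** (Appendix A).
If `ℓ'(y,·)` is `L`-Lipschitz, `f` is uniformly `M_f`-Lipschitz and `p` uniformly
`M_p`-Lipschitz in `x`, the conditional densities integrate to one, and
`∫ |f(z,x)| dν ≤ B`, then the optimal dual `u*(x,y) = ℓ'(y, v x)` satisfies
`|u*(x₁,y) − u*(x₂,y)| ≤ (L M_f + L M_p B) d(x₁,x₂)`. -/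
theorem optimal_dual_lipschitz
    {Z : Type*} [MeasurableSpace Z] {X : Type*} [MetricSpace X] {Y : Type*}
    (ν : Measure Z) [SigmaFinite ν]
    (p : Z × X → ℝ) (hp_nonneg : ∀ z x, 0 ≤ p (z, x))
    (hp_int : ∀ x : X, Integrable (fun z => p (z, x)) ν)
    (hp_dens : ∀ x : X, ∫ z, p (z, x) ∂ν = 1)
    (f : Z × X → ℝ)
    (v : X → ℝ) (hv : ∀ x, v x = ∫ z, f (z, x) * p (z, x) ∂ν)
    (ℓ : Y → ℝ → ℝ) (ℓ' : Y → ℝ → ℝ)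
    (hderiv : ∀ y w, HasDerivAt (ℓ y) (ℓ' y w) w)
    (L Mf Mp B : ℝ)
    (hL : ∀ y : Y, ∀ a b : ℝ, |ℓ' y a - ℓ' y b| ≤ L * |a - b|)
    (hf_lip : ∀ z : Z, ∀ x₁ x₂ : X, |f (z, x₁) - f (z, x₂)| ≤ Mf * dist x₁ x₂)
    (hp_lip : ∀ z : Z, ∀ x₁ x₂ : X, |p (z, x₁) - p (z, x₂)| ≤ Mp * dist x₁ x₂)
    (hfp_int : ∀ x : X, Integrable (fun z => f (z, x) * p (z, x)) ν)
    (hf_int : ∀ x : X, Integrable (fun z => f (z, x)) ν)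
    (hf_bd : ∀ x : X, ∫ z, |f (z, x)| ∂ν ≤ B) :
    ∀ y : Y, ∀ x₁ x₂ : X,
      |ℓ' y (v x₁) - ℓ' y (v x₂)| ≤ (L * Mf + L * Mp * B) * dist x₁ x₂ := by

  intro y x₁ x₂
  have hL0 : 0 ≤ L := by
    have h := hL y 0 1
    simp at h
    exact le_trans (abs_nonneg _) (by linarith [h])
  by_cases hxx : x₁ = x₂
  · subst hxx
    simp
  · have hd : 0 < dist x₁ x₂ := dist_pos.2 hxx
    have hZ : Nonempty Z := by
      by_contra h
      rw [not_nonempty_iff] at h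
      have := hp_dens x₁
      simp [integral_of_isEmpty] at this
    obtain ⟨z0⟩ := hZ
    have hMp : 0 ≤ Mp := by
      have h := (abs_nonneg _).trans (hp_lip z0 x₁ x₂)
      nlinarith
    have hMf : 0 ≤ Mf := by
      have h := (abs_nonneg _).trans (hf_lip z0 x₁ x₂)
      nlinarith
    have hB : 0 ≤ B := le_trans (integral_nonneg fun z => abs_nonneg _) (hf_bd x₁)
    have key : |v x₁ - v x₂| ≤ (Mf + Mp * B) * dist x₁ x₂ := by
      rw [hv, hv, ← integral_sub (hfp_int x₁) (hfp_int x₂)]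
      have h1 : |∫ z, (f (z, x₁) * p (z, x₁) - f (z, x₂) * p (z, x₂)) ∂ν|
          ≤ ∫ z, |f (z, x₁) * p (z, x₁) - f (z, x₂) * p (z, x₂)| ∂ν := by
        simpa [Real.norm_eq_abs] using
          norm_integral_le_integral_norm (fun z => f (z, x₁) * p (z, x₁) - f (z, x₂) * p (z, x₂))
      have h2 : ∫ z, |f (z, x₁) * p (z, x₁) - f (z, x₂) * p (z, x₂)| ∂ν
          ≤ ∫ z, (Mf * dist x₁ x₂ * p (z, x₁) + Mp * dist x₁ x₂ * |f (z, x₂)|) ∂ν := by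
        apply integral_mono ((hfp_int x₁).sub (hfp_int x₂)).abs
        · exact ((hp_int x₁).const_mul _).add ((hf_int x₂).abs.const_mul _)
        · intro z
          have e1 : f (z, x₁) * p (z, x₁) - f (z, x₂) * p (z, x₂)
              = (f (z, x₁) - f (z, x₂)) * p (z, x₁) + f (z, x₂) * (p (z, x₁) - p (z, x₂)) := by
            ring
          calc |f (z, x₁) * p (z, x₁) - f (z, x₂) * p (z, x₂)|
              ≤ |(f (z, x₁) - f (z, x₂)) * p (z, x₁)| + |f (z, x₂) * (p (z, x₁) - p (z, x₂))| := by
                rw [e1]; exact abs_add_le _ _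
            _ = |f (z, x₁) - f (z, x₂)| * p (z, x₁) + |f (z, x₂)| * |p (z, x₁) - p (z, x₂)| := by
                rw [abs_mul, abs_mul, abs_of_nonneg (hp_nonneg z x₁)]
            _ ≤ Mf * dist x₁ x₂ * p (z, x₁) + Mp * dist x₁ x₂ * |f (z, x₂)| := by
                have := hf_lip z x₁ x₂
                have := hp_lip z x₁ x₂
                have := hp_nonneg z x₁
                have := abs_nonneg (f (z, x₂))
                have := abs_nonneg (p (z, x₁) - p (z, x₂))
                nlinarith
      have h3 : ∫ z, (Mf * dist x₁ x₂ * p (z, x₁) + Mp * dist x₁ x₂ * |f (z, x₂)|) ∂ν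
          = Mf * dist x₁ x₂ + Mp * dist x₁ x₂ * ∫ z, |f (z, x₂)| ∂ν := by
        rw [integral_add ((hp_int x₁).const_mul _) ((hf_int x₂).abs.const_mul _),
          integral_const_mul, integral_const_mul, hp_dens x₁, mul_one]
      have h4 : Mp * dist x₁ x₂ * ∫ z, |f (z, x₂)| ∂ν ≤ Mp * dist x₁ x₂ * B := by
        apply mul_le_mul_of_nonneg_left (hf_bd x₂) (by positivity)
      calc |∫ z, (f (z, x₁) * p (z, x₁) - f (z, x₂) * p (z, x₂)) ∂ν|
          ≤ Mf * dist x₁ x₂ + Mp * dist x₁ x₂ * ∫ z, |f (z, x₂)| ∂ν := by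
            rw [← h3]; exact h1.trans h2
        _ ≤ (Mf + Mp * B) * dist x₁ x₂ := by nlinarith
    calc |ℓ' y (v x₁) - ℓ' y (v x₂)| ≤ L * |v x₁ - v x₂| := hL y _ _
      _ ≤ L * ((Mf + Mp * B) * dist x₁ x₂) := mul_le_mul_of_nonneg_left key hL0
      _ = (L * Mf + L * Mp * B) * dist x₁ x₂ := by ring
end

section
/- Let F be a nonempty set, let 𝒱 be a set of bounded real-valued functions on a set Ξ, and let 𝒰 ⊆ 𝒱. Let Φ : F × 𝒱 → ℝ satisfy |Φ(f, u₁) − Φ(f, u₂)| ≤ c·‖u₁ − u₂‖_∞ for all f ∈ F and u₁, u₂ ∈ 𝒱. Suppose every u ∈ 𝒱 admits h ∈ 𝒰 with ‖u − h‖_∞ ≤ ℰ, that L(f) := sup_{u ∈ 𝒱} Φ(f,u) and L̂(f) := sup_{u ∈ 𝒰} Φ(f,u) are finite for every f ∈ F, and that inf_{f ∈ F} Φ(f, ū) is finite for the given ū. Then for any f̄ ∈ F, ū ∈ 𝒰, and f* ∈ F: L(f̄) − L(f*) ≤ ε_gap(f̄, ū) + 2·c·ℰ, where ε_gap(f̄,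 ū) := sup_{u ∈ 𝒰} Φ(f̄, u) − inf_{f ∈ F} Φ(f, ū). (Decomposition of the generalization error into optimization error plus approximation error, Appendix C.1 combined with Proposition 2; in the paper c = C + K and ℰ = ℰ(δ) is the RKHS-ball approximation error.) -/
/-- **Decomposition of the generalization error** (Appendix C.1 with Proposition 2):
for a saddle objective `Φ` that is `c`-Lipschitz in its dual argument w.r.t. the
sup-norm over a class `V` of bounded functions, if every `u ∈ V` is approximated
within `E` (in sup-norm) by some `h ∈ U ⊆ V`, then for any candidate `f̄`, dual
`ū ∈ U` and comparator `f*`,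
`L(f̄) − L(f*) ≤ ε_gap(f̄, ū) + 2 c E`, where `L(f) = sup_{u ∈ V} Φ(f,u)` and
`ε_gap(f̄, ū) = sup_{u ∈ U} Φ(f̄,u) − inf_{f} Φ(f,ū)`. -/
theorem generalization_error_decomposition
    {F : Type*} [Nonempty F] {Ξ : Type*}
    (V U : Set (Ξ → ℝ)) (hUV : U ⊆ V) (hUne : U.Nonempty)
    (hVbdd : ∀ u ∈ V, ∃ B : ℝ, ∀ ξ, |u ξ| ≤ B)
    (Φ : F → (Ξ → ℝ) → ℝ) (c : ℝ) (hc : 0 ≤ c)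
    (hLip : ∀ f : F, ∀ u₁ ∈ V, ∀ u₂ ∈ V,
      |Φ f u₁ - Φ f u₂| ≤ c * ⨆ ξ : Ξ, |u₁ ξ - u₂ ξ|)
    (E : ℝ) (hE : 0 ≤ E)
    (happrox : ∀ u ∈ V, ∃ h ∈ U, ∀ ξ : Ξ, |u ξ - h ξ| ≤ E)
    (hLbdd : ∀ f : F, BddAbove ((Φ f) '' V))
    (fbar : F) (ubar : Ξ → ℝ) (hubar : ubar ∈ U) (fstar : F)
    (hInf : BddBelow (Set.range fun f : F => Φ f ubar)) :
    sSup ((Φ fbar) '' V) - sSup ((Φ fstar) '' V) ≤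
      (sSup ((Φ fbar) '' U) - sInf (Set.range fun f : F => Φ f ubar))
        + 2 * c * E := by
  have hVne : V.Nonempty := hUne.mono hUV
  have hUbdd : BddAbove ((Φ fbar) '' U) :=
    (hLbdd fbar).mono (Set.image_mono hUV)
  -- Step A: sSup (Φ fbar '' V) ≤ sSup (Φ fbar '' U) + c * E
  have hA : sSup ((Φ fbar) '' V) ≤ sSup ((Φ fbar) '' U) + c * E := by
    apply csSup_le (hVne.image _)
    rintro y ⟨u, hu, rfl⟩
    obtain ⟨h, hhU, hhE⟩ := happrox u hu
    have h1 : Φ fbar u - Φ fbar h ≤ c * E := by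
      have hsup : (⨆ ξ : Ξ, |u ξ - h ξ|) ≤ E :=
        Real.iSup_le (fun ξ => hhE ξ) hE
      calc Φ fbar u - Φ fbar h ≤ |Φ fbar u - Φ fbar h| := le_abs_self _
        _ ≤ c * ⨆ ξ : Ξ, |u ξ - h ξ| := hLip fbar u hu h (hUV hhU)
        _ ≤ c * E := mul_le_mul_of_nonneg_left hsup hc
    have h2 : Φ fbar h ≤ sSup ((Φ fbar) '' U) :=
      le_csSup hUbdd ⟨h, hhU, rfl⟩
    linarith
  -- Step B: sInf (range fun f => Φ f ubar) ≤ sSup (Φ fstar '' V)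
  have hB : sInf (Set.range fun f : F => Φ f ubar) ≤ sSup ((Φ fstar) '' V) := by
    calc sInf (Set.range fun f : F => Φ f ubar) ≤ Φ fstar ubar :=
          csInf_le hInf ⟨fstar, rfl⟩
      _ ≤ sSup ((Φ fstar) '' V) := le_csSup (hLbdd fstar) ⟨ubar, hUV hubar, rfl⟩
  have hcE : 0 ≤ c * E := mul_nonneg hc hE
  linarith
end

section
/- Let H be a real Hilbert space, (Ω, μ) a probability space, φ : Ω → H measurable with ‖φ(ω)‖ ≤ κ' for all ω, a : Ω → ℝ μ-integrable, and ℓ* : Ω × ℝ → ℝ measurable such that for every ω the map t ↦ ℓ*(ω, t) is differentiable with derivative ∂₂ℓ*(ω, t) satisfying |∂₂ℓ*(ω, t)| ≤ g(ω) for all t, where g is μ-integrable, and ω ↦ ℓ*(ω, ⟨u, φ(ω)⟩) is μ-integrable for every u ∈ H. Define Ψ(u) := ∫ [a(ω)·⟨u, φ(ω)⟩ − ℓ*(ω, ⟨u, φ(ω)⟩)] dμ(ω). Then the Bochner integral G(u) := ∫ [a(ω) − ∂₂ℓ*(ω, ⟨u, φ(ω)⟩)]·φ(ω) dμ(ω)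 exists and, for every u, h ∈ H, the directional derivative lim_{s→0} (Ψ(u + s·h) − Ψ(u))/s exists and equals ⟨G(u), h⟩; i.e., the stochastic gradient [a(ω) − ∂₂ℓ*(ω, ⟨u, φ(ω)⟩)]·φ(ω) is an unbiased estimate of the gradient of Ψ at u. -/
open MeasureTheory Filter Metric

/-- **Unbiasedness of the dual stochastic gradient.**  For
`Ψ(u) = ∫ [a(ω)⟨u,φ(ω)⟩ − ℓ*(ω,⟨u,φ(ω)⟩)] dμ`, with a dominated derivative
`∂₂ℓ*`, the Bochner integral `G(u) = ∫ [a(ω) − ∂₂ℓ*(ω,⟨u,φ(ω)⟩)] • φ(ω) dμ`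
exists and every directional derivative of `Ψ` at `u` in direction `h` exists and
equals `⟨G(u), h⟩`. -/
theorem dual_gradient_unbiased
    {H : Type*} [NormedAddCommGroup H] [InnerProductSpace ℝ H] [CompleteSpace H]
    [SecondCountableTopology H] [MeasurableSpace H] [BorelSpace H]
    {Ω : Type*} [MeasurableSpace Ω] (μ : Measure Ω) [IsProbabilityMeasure μ]
    (φ : Ω → H) (hφ : Measurable φ)
    (kap' : ℝ) (hφbd : ∀ ω, ‖φ ω‖ ≤ kap')
    (a : Ω → ℝ) (ha : Integrable a μ)
    (ℓstar : Ω → ℝ → ℝ)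
    (hℓmeas : Measurable fun q : Ω × ℝ => ℓstar q.1 q.2)
    (dℓ : Ω → ℝ → ℝ) (hd : ∀ ω t, HasDerivAt (ℓstar ω) (dℓ ω t) t)
    (g : Ω → ℝ) (hg : Integrable g μ)
    (hdbd : ∀ ω, ∀ t : ℝ, |dℓ ω t| ≤ g ω)
    (hℓint : ∀ u : H, Integrable (fun ω => ℓstar ω (inner ℝ u (φ ω) : ℝ)) μ)
    (Ψ : H → ℝ)
    (hΨ : ∀ u : H, Ψ u = ∫ ω,
      (a ω * (inner ℝ u (φ ω) : ℝ) - ℓstar ω (inner ℝ u (φ ω) : ℝ)) ∂μ) :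
    ∀ u : H,
      Integrable (fun ω => (a ω - dℓ ω (inner ℝ u (φ ω) : ℝ)) • φ ω) μ ∧
      ∀ h : H,
        HasDerivAt (fun s : ℝ => Ψ (u + s • h))
          (inner ℝ (∫ ω, (a ω - dℓ ω (inner ℝ u (φ ω) : ℝ)) • φ ω ∂μ) h : ℝ) 0 := by
  -- measurability of ω ↦ dℓ ω (f ω) for measurable f
  have hdmeas : ∀ f : Ω → ℝ, Measurable f → Measurable fun ω => dℓ ω (f ω) := by
    intro f hf
    have hmeasn : ∀ n : ℕ, Measurable fun ω =>
        (ℓstar ω (f ω + ((n : ℝ) + 1)⁻¹) - ℓstar ω (f ω)) / ((n : ℝ) + 1)⁻¹ := by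
      intro n
      exact ((hℓmeas.comp (measurable_id.prodMk (hf.add_const _))).sub
        (hℓmeas.comp (measurable_id.prodMk hf))).div_const _
    apply measurable_of_tendsto_metrizable hmeasn
    rw [tendsto_pi_nhds]
    intro ω
    have h1 : Tendsto (slope (ℓstar ω) (f ω)) (nhdsWithin (f ω) {x | x ≠ f ω})
        (nhds (dℓ ω (f ω))) := hasDerivAt_iff_tendsto_slope.mp (hd ω (f ω))
    have h2 : Tendsto (fun n : ℕ => f ω + ((n : ℝ) + 1)⁻¹) atTop
        (nhdsWithin (f ω) {x | x ≠ f ω}) := by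
      apply tendsto_nhdsWithin_of_tendsto_nhds_of_eventually_within
      · have : Tendsto (fun n : ℕ => ((n : ℝ) + 1)⁻¹) atTop (nhds 0) := by
          simpa [one_div] using (tendsto_one_div_add_atTop_nhds_zero_nat :
            Tendsto (fun n : ℕ => 1 / ((n : ℝ) + 1)) atTop (nhds 0))
        simpa using tendsto_const_nhds.add this
      · filter_upwards with n
        have : (0 : ℝ) < ((n : ℝ) + 1)⁻¹ := by positivity
        show f ω + ((n : ℝ) + 1)⁻¹ ∈ {x | x ≠ f ω}
        simp only [Set.mem_setOf_eq]
        intro hcontra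
        linarith
    have := h1.comp h2
    simpa [Function.comp_def, slope, add_sub_cancel_left, mul_comm] using this
  intro u
  set c : Ω → ℝ := fun ω => (inner ℝ u (φ ω) : ℝ) with hc
  have hcmeas : Measurable c := measurable_const.inner hφ
  have hdc_meas : Measurable fun ω => dℓ ω (c ω) := hdmeas c hcmeas
  -- integrability of the gradient integrand
  have hint : Integrable (fun ω => (a ω - dℓ ω (c ω)) • φ ω) μ := by
    have hb : Integrable (fun ω => (|a ω| + g ω) * |kap'|) μ := by
      simpa using (ha.abs.add hg).mul_const |kap'|
    apply Integrable.mono' hb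
    · exact ((ha.aestronglyMeasurable.sub hdc_meas.aestronglyMeasurable).smul
        hφ.aestronglyMeasurable)
    · filter_upwards with ω
      rw [norm_smul]
      have h1 : ‖a ω - dℓ ω (c ω)‖ ≤ |a ω| + g ω := by
        calc ‖a ω - dℓ ω (c ω)‖ ≤ |a ω| + |dℓ ω (c ω)| := abs_sub _ _
        _ ≤ |a ω| + g ω := by have := hdbd ω (c ω); linarith
      have h2 : ‖φ ω‖ ≤ |kap'| := (hφbd ω).trans (le_abs_self _)
      exact mul_le_mul h1 h2 (norm_nonneg _)
        (le_trans (norm_nonneg _) h1)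

  refine ⟨hint, fun h => ?_⟩
  set d : Ω → ℝ := fun ω => (inner ℝ h (φ ω) : ℝ) with hdd
  have hdmeas' : Measurable d := measurable_const.inner hφ
  have hinner : ∀ s : ℝ, ∀ ω, (inner ℝ (u + s • h) (φ ω) : ℝ) = c ω + s * d ω := by
    intro s ω
    simp [hc, hdd, inner_add_left, real_inner_smul_left]
  -- set up the parametric integral
  set F : ℝ → Ω → ℝ := fun s ω => a ω * (c ω + s * d ω) - ℓstar ω (c ω + s * d ω) with hF
  set F' : ℝ → Ω → ℝ := fun s ω => (a ω - dℓ ω (c ω + s * d ω)) * d ω with hF'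
  have hdbound : ∀ ω, |d ω| ≤ |kap'| * ‖h‖ := by
    intro ω
    calc |d ω| ≤ ‖h‖ * ‖φ ω‖ := abs_real_inner_le_norm _ _
    _ ≤ ‖h‖ * |kap'| := by
        have := (hφbd ω).trans (le_abs_self kap'); nlinarith [norm_nonneg h]
    _ = |kap'| * ‖h‖ := mul_comm _ _
  have key : Integrable (F' 0) μ ∧
      HasDerivAt (fun s => ∫ ω, F s ω ∂μ) (∫ ω, F' 0 ω ∂μ) 0 := by
    apply hasDerivAt_integral_of_dominated_loc_of_deriv_le (s := ball 0 1) (ball_mem_nhds 0 one_pos)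
      (bound := fun ω => (|a ω| + g ω) * (|kap'| * ‖h‖))
    · filter_upwards with s
      exact (ha.aestronglyMeasurable.mul
        (hcmeas.add (hdmeas'.const_mul s)).aestronglyMeasurable).sub
        (hℓmeas.comp (measurable_id.prodMk
          (hcmeas.add (hdmeas'.const_mul s)))).aestronglyMeasurable
    · -- integrability of F 0
      have h1 : Integrable (fun ω => a ω * c ω) μ := by
        have hbdd : ∃ C, ∀ x : Ω, ‖c x‖ ≤ C := by
          refine ⟨‖u‖ * |kap'|, fun ω => ?_⟩
          calc ‖c ω‖ ≤ ‖u‖ * ‖φ ω‖ := abs_real_inner_le_norm _ _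
          _ ≤ ‖u‖ * |kap'| := by
              have := (hφbd ω).trans (le_abs_self kap'); nlinarith [norm_nonneg u]
        simpa [mul_comm] using ha.bdd_mul hcmeas.aestronglyMeasurable (ae_of_all _ hbdd.choose_spec)
      have h2 : Integrable (fun ω => ℓstar ω (c ω)) μ := hℓint u
      simpa [hF, Pi.sub_def] using h1.sub h2
    · exact ((ha.aestronglyMeasurable.sub
        (hdmeas (fun ω => c ω + 0 * d ω) (hcmeas.add (hdmeas'.const_mul 0))).aestronglyMeasurable).mul
        hdmeas'.aestronglyMeasurable)
    · filter_upwards with ω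
      intro s _
      simp only [hF']
      rw [norm_mul, Real.norm_eq_abs, Real.norm_eq_abs]
      have h1 : |a ω - dℓ ω (c ω + s * d ω)| ≤ |a ω| + g ω := by
        calc |a ω - dℓ ω (c ω + s * d ω)| ≤ |a ω| + |dℓ ω (c ω + s * d ω)| := abs_sub _ _
        _ ≤ |a ω| + g ω := by have := hdbd ω (c ω + s * d ω); linarith
      have h2 := hdbound ω
      exact mul_le_mul h1 h2 (abs_nonneg _) (le_trans (abs_nonneg _) h1)
    · exact (ha.abs.add hg).mul_const _
    · filter_upwards with ω
      intro s _
      have hlin : HasDerivAt (fun s : ℝ => c ω + s * d ω) (d ω) s := by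
        simpa [mul_comm] using ((hasDerivAt_id s).const_mul (d ω)).const_add (c ω)
      have hcomp : HasDerivAt (fun s : ℝ => ℓstar ω (c ω + s * d ω))
          (dℓ ω (c ω + s * d ω) * d ω) s := by
        simpa [Function.comp_def] using (hd ω (c ω + s * d ω)).comp s
          (by simpa [mul_comm] using hlin)
      have hmul : HasDerivAt (fun s : ℝ => a ω * (c ω + s * d ω)) (a ω * d ω) s :=
        hlin.const_mul (a ω)
      have := hmul.sub hcomp
      convert this using 1
      show (a ω - dℓ ω (c ω + s * d ω)) * d ω = a ω * d ω - dℓ ω (c ω + s * d ω) * d ω; ring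
      rfl
  obtain ⟨-, hderiv⟩ := key
  have hΨeq : (fun s : ℝ => Ψ (u + s • h)) = fun s => ∫ ω, F s ω ∂μ := by
    funext s
    rw [hΨ (u + s • h)]
    congr 1
    funext ω
    rw [hinner s ω]
  rw [hΨeq]
  convert hderiv using 1
  -- identify the inner product with the integral of F' 0
  rw [real_inner_comm, ← integral_inner hint h]
  apply integral_congr_ae
  filter_upwards with ω
  simp [hF', hdd, real_inner_smul_right]
end
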